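/- For every integer n ≥ 2 and all x, y in the open unit ball B_n of ℝ^n, one has (1 + |φ_y(x)|)/(1 − |φ_y(x)|) ≥ (1 − |y|²)/(1 − |x|²). -/

import Mathlib

open Metric EuclideanSpace Real

/-- The quantity `[x,a] = (1 + |a|²|x|² − 2⟨a,x⟩)^{1/2}` (equal to the Clifford norm `|1 − x·ā|`). -/
noncomputable def bracket {n : ℕ} (x a : EuclideanSpace ℝ (Fin n)) : ℝ :=
  Real.sqrt (1 + ‖a‖ ^ 2 * ‖x‖ ^ 2 - 2 * inner ℝ a x)

/-- The Möbius transformation `φ_a(x) = ((1−|a|²)(a−x) + |a−x|² a)/[x,a]²` of the unit ball. -/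
noncomputable def phi {n : ℕ} (a x : EuclideanSpace ℝ (Fin n)) : EuclideanSpace ℝ (Fin n) :=
  ((bracket x a) ^ 2)⁻¹ • ((1 - ‖a‖ ^ 2) • (a - x) + ‖a - x‖ ^ 2 • a)

/-- The Laplacian `Δf(x) = ∑ i ∂²f/∂x_i²(x)` of a (possibly vector-valued) function. -/
noncomputable def lap {n : ℕ} {F : Type*} [NormedAddCommGroup F] [NormedSpace ℝ F]
    (f : EuclideanSpace ℝ (Fin n) → F) (x : EuclideanSpace ℝ (Fin n)) : F :=
  ∑ i : Fin n,
    fderiv ℝ (fderiv ℝ f) x (EuclideanSpace.single i (1 : ℝ)) (EuclideanSpace.single i (1 : ℝ))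

/-- `f` is harmonic on the open unit ball: it is `C²` there and satisfies Laplace's equation. -/
def IsHarmonicOnBall {n : ℕ} {F : Type*} [NormedAddCommGroup F] [NormedSpace ℝ F]
    (f : EuclideanSpace ℝ (Fin n) → F) : Prop :=
  ContDiffOn ℝ 2 f (ball 0 1) ∧
    ∀ x ∈ ball (0 : EuclideanSpace ℝ (Fin n)) 1, lap f x = 0

/-- The hyperbolic metric `d_{B_n}(x,y) = 2 tanh⁻¹(|φ_y(x)|) = log((1+|φ_y(x)|)/(1−|φ_y(x)|))`. -/
noncomputable def hypDist {n : ℕ} (x y : EuclideanSpace ℝ (Fin n)) : ℝ :=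
  Real.log ((1 + ‖phi y x‖) / (1 - ‖phi y x‖))

/-- The Poisson kernel `P_ξ(x) = (1−|x|²)/|x−ξ|^n`. -/
noncomputable def poisson {n : ℕ} (ξ x : EuclideanSpace ℝ (Fin n)) : ℝ :=
  (1 - ‖x‖ ^ 2) / ‖x - ξ‖ ^ n

/-- The volume of the unit ball in `ℝ^k`. -/
noncomputable def volB (k : ℕ) : ℝ :=
  (MeasureTheory.volume (ball (0 : EuclideanSpace ℝ (Fin k)) 1)).toReal

/-
With `s = |x|`, `r = |y|`, `d = |x - y|` and `b = [x, y]` one has `|φ_y(x)| = d / b` and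
`b² - d² = (1 - s²)(1 - r²)`, so the right-hand side equals `(b + d)² / ((1 - s²)(1 - r²))` and the
inequality reduces to `1 - r² ≤ b + d`. This follows from `b ≥ 1 - rs` (Cauchy–Schwarz) together
with `d ≥ 0` when `s ≤ r` and `d ≥ s - r` when `r ≤ s`.
-/

section Bracket

variable {n : ℕ}

lemma bracket_nonneg (x a : EuclideanSpace ℝ (Fin n)) : 0 ≤ bracket x a :=
  Real.sqrt_nonneg _

lemma sq_one_sub_norm_mul_norm_le (x a : EuclideanSpace ℝ (Fin n)) :
    (1 - ‖a‖ * ‖x‖) ^ 2 ≤ 1 + ‖a‖ ^ 2 * ‖x‖ ^ 2 - 2 * inner ℝ a x := by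
  nlinarith [real_inner_le_norm a x]

lemma bracket_sq (x a : EuclideanSpace ℝ (Fin n)) :
    bracket x a ^ 2 = 1 + ‖a‖ ^ 2 * ‖x‖ ^ 2 - 2 * inner ℝ a x :=
  Real.sq_sqrt ((sq_nonneg _).trans (sq_one_sub_norm_mul_norm_le x a))

lemma one_sub_norm_mul_norm_le_bracket (x a : EuclideanSpace ℝ (Fin n)) :
    1 - ‖a‖ * ‖x‖ ≤ bracket x a :=
  Real.le_sqrt_of_sq_le (sq_one_sub_norm_mul_norm_le x a)

lemma bracket_sq_eq_norm_sub_sq_add (x a : EuclideanSpace ℝ (Fin n)) :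
    bracket x a ^ 2 = ‖x - a‖ ^ 2 + (1 - ‖x‖ ^ 2) * (1 - ‖a‖ ^ 2) := by
  rw [bracket_sq, norm_sub_sq_real, real_inner_comm]
  ring

lemma norm_phi_numerator (a x : EuclideanSpace ℝ (Fin n)) :
    ‖(1 - ‖a‖ ^ 2) • (a - x) + ‖a - x‖ ^ 2 • a‖ = ‖x - a‖ * bracket x a := by
  have hd : ‖a - x‖ ^ 2 = ‖a‖ ^ 2 - 2 * inner ℝ x a + ‖x‖ ^ 2 := by
    rw [norm_sub_sq_real, real_inner_comm]
  have hb : bracket x a ^ 2 = 1 + ‖a‖ ^ 2 * ‖x‖ ^ 2 - 2 * inner ℝ x a := by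
    rw [bracket_sq, real_inner_comm]
  rw [← sq_eq_sq₀ (norm_nonneg _) (mul_nonneg (norm_nonneg _) (bracket_nonneg x a)), norm_add_sq_real, norm_smul, norm_smul,
    real_inner_smul_left, real_inner_smul_right, inner_sub_left, real_inner_self_eq_norm_sq,
    Real.norm_eq_abs, Real.norm_eq_abs, mul_pow, mul_pow, sq_abs, sq_abs, norm_sub_rev x a]
  linear_combination (‖a - x‖ ^ 2 * ‖a‖ ^ 2) * hd - ‖a - x‖ ^ 2 * hb

lemma norm_phi (a x : EuclideanSpace ℝ (Fin n)) : ‖phi a x‖ = ‖x - a‖ / bracket x a := by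
  rw [phi, norm_smul, norm_phi_numerator, norm_inv, norm_pow, Real.norm_of_nonneg
    (bracket_nonneg x a)]
  rcases eq_or_ne (bracket x a) 0 with h | h
  · simp [h]
  · field_simp

end Bracket

lemma one_add_div_div_one_sub_div {d b : ℝ} (hb : b ≠ 0) :
    (1 + d / b) / (1 - d / b) = (b + d) / (b - d) := by
  rw [one_add_div hb, one_sub_div hb, div_div_div_cancel_right₀ hb]

lemma one_sub_sq_div_one_sub_sq_le {s r d b : ℝ} (hs0 : 0 ≤ s) (hs : s < 1) (hr0 : 0 ≤ r)
    (hr : r < 1) (hd0 : 0 ≤ d) (hsd : s - r ≤ d) (hb : 1 - r * s ≤ b)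
    (hbd : b ^ 2 = d ^ 2 + (1 - s ^ 2) * (1 - r ^ 2)) :
    (1 - r ^ 2) / (1 - s ^ 2) ≤ (1 + d / b) / (1 - d / b) := by
  have hs2 : 0 < 1 - s ^ 2 := by nlinarith
  have hr2 : 0 < 1 - r ^ 2 := by nlinarith
  have hb0 : 0 < b := by nlinarith [mul_lt_mul'' hr hs hr0 hs0]
  have hprod : (1 - s ^ 2) * (1 - r ^ 2) = (b + d) * (b - d) := by linear_combination -hbd
  have hkey : 1 - r ^ 2 ≤ b + d := by
    rcases le_total s r with h | h <;> nlinarith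
  calc (1 - r ^ 2) / (1 - s ^ 2) = (1 - r ^ 2) ^ 2 / ((1 - s ^ 2) * (1 - r ^ 2)) := by
        field_simp
    _ ≤ (b + d) ^ 2 / ((1 - s ^ 2) * (1 - r ^ 2)) := by gcongr
    _ = (b + d) / (b - d) := by
        rw [hprod, sq, mul_div_mul_left _ _ (by linarith)]
    _ = (1 + d / b) / (1 - d / b) := (one_add_div_div_one_sub_div hb0.ne').symm

theorem moebius_quotient_inequality_general {n : ℕ} :
    ∀ x ∈ ball (0 : EuclideanSpace ℝ (Fin n)) 1,
      ∀ y ∈ ball (0 : EuclideanSpace ℝ (Fin n)) 1,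
        (1 - ‖y‖ ^ 2) / (1 - ‖x‖ ^ 2) ≤ (1 + ‖phi y x‖) / (1 - ‖phi y x‖) := by
  intro x hx y hy
  rw [mem_ball_zero_iff] at hx hy
  rw [norm_phi]
  exact one_sub_sq_div_one_sub_sq_le (norm_nonneg x) hx (norm_nonneg y) hy (norm_nonneg _)
    (norm_sub_norm_le x y) (one_sub_norm_mul_norm_le_bracket x y)
    (bracket_sq_eq_norm_sub_sq_add x y)

/-- For `x, y` in the unit ball, `(1+|φ_y(x)|)/(1−|φ_y(x)|) ≥ (1−|y|²)/(1−|x|²)`. -/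
theorem moebius_quotient_inequality {n : ℕ} (hn : 2 ≤ n) :
    ∀ x ∈ ball (0 : EuclideanSpace ℝ (Fin n)) 1,
      ∀ y ∈ ball (0 : EuclideanSpace ℝ (Fin n)) 1,
        (1 - ‖y‖ ^ 2) / (1 - ‖x‖ ^ 2) ≤ (1 + ‖phi y x‖) / (1 - ‖phi y x‖) :=
  moebius_quotient_inequality_general
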